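/- arXiv:1807.10041 — 7 statements merged into one kernel-verified Lean document; each statement's English description precedes it below -/
import Mathlib

section
/- For all real numbers a, b and vectors α, β, t in ℝⁿ, one has (a² + b²)·(‖a·t − β‖² + ‖b·t + α‖²) ≥ ‖a·α + b·β‖², where ‖·‖ denotes the Euclidean norm. -/
theorem stmt_0 (n : ℕ) (a b : ℝ) (α β t : EuclideanSpace ℝ (Fin n)) :
    ‖a • α + b • β‖ ^ 2 ≤ (a ^ 2 + b ^ 2) * (‖a • t - β‖ ^ 2 + ‖b • t + α‖ ^ 2) := by
  set u := a • t - β with hu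
  set v := b • t + α with hv
  have key : a • α + b • β = a • v - b • u := by
    rw [hu, hv]
    module
  rw [key]
  have h1 : ‖a • v - b • u‖ ≤ |a| * ‖v‖ + |b| * ‖u‖ := by
    calc ‖a • v - b • u‖ ≤ ‖a • v‖ + ‖b • u‖ := norm_sub_le _ _
    _ = |a| * ‖v‖ + |b| * ‖u‖ := by rw [norm_smul, norm_smul]; rfl
  have h2 : (0:ℝ) ≤ ‖a • v - b • u‖ := norm_nonneg _
  have h3 : (0:ℝ) ≤ ‖u‖ := norm_nonneg _
  have h4 : (0:ℝ) ≤ ‖v‖ := norm_nonneg _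
  nlinarith [sq_abs a, sq_abs b, abs_nonneg a, abs_nonneg b,
    sq_nonneg (|a| * ‖u‖ - |b| * ‖v‖), sq_nonneg (‖a • v - b • u‖ - (|a| * ‖v‖ + |b| * ‖u‖))]
end

section
/- Let s > 1 and p ≥ 2 be real numbers. Then there exists a constant C > 0, depending only on s and p, such that for all real numbers a, b with |a| > |b|, one has (|a|^{(s+2)/(2p)} − |b|^{(s+2)/(2p)})^{2p} ≤ C·(a − b)³·(|a|^{s−2}·a − |b|^{s−2}·b). -/
open Real

/-- For `0 < α` and `t ∈ [0,1]`, `1 - t^α ≤ max α 1 * (1 - t)`. -/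
lemma aux_upper {α t : ℝ} (hα : 0 < α) (ht0 : 0 ≤ t) (ht1 : t ≤ 1) :
    1 - t ^ α ≤ max α 1 * (1 - t) := by
  rcases le_or_gt α 1 with h | h
  · have htα : t ≤ t ^ α := by
      rcases eq_or_lt_of_le ht0 with rfl | ht0'
      · rcases eq_or_lt_of_le h with rfl | h'
        · simp
        · rw [Real.zero_rpow hα.ne']
      · calc t = t ^ (1:ℝ) := (Real.rpow_one t).symm
          _ ≤ t ^ α := Real.rpow_le_rpow_of_exponent_ge ht0' ht1 h
    have h1 : (1:ℝ) ≤ max α 1 := le_max_right _ _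
    nlinarith [sub_nonneg.mpr ht1]
  · have hb : 1 + α * (t - 1) ≤ (1 + (t - 1)) ^ α :=
      one_add_mul_self_le_rpow_one_add (by linarith) h.le
    have ht : 1 + (t - 1) = t := by ring
    rw [ht] at hb
    have hm : max α 1 = α := max_eq_left h.le
    rw [hm]; nlinarith

/-- For `0 < θ` and `t ∈ [0,1]`, `min θ 1 * (1 - t) ≤ 1 - t^θ`. -/
lemma aux_lower {θ t : ℝ} (hθ : 0 < θ) (ht0 : 0 ≤ t) (ht1 : t ≤ 1) :
    min θ 1 * (1 - t) ≤ 1 - t ^ θ := by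
  rcases le_or_gt 1 θ with h | h
  · have htθ : t ^ θ ≤ t := by
      rcases eq_or_lt_of_le ht0 with rfl | ht0'
      · rw [Real.zero_rpow hθ.ne']
      · calc t ^ θ ≤ t ^ (1:ℝ) := Real.rpow_le_rpow_of_exponent_ge ht0' ht1 h
          _ = t := Real.rpow_one t
    have h1 : min θ 1 ≤ 1 := min_le_right _ _
    have h0 : 0 < min θ 1 := lt_min hθ one_pos
    nlinarith [sub_nonneg.mpr ht1]
  · have hb : (1 + (t - 1)) ^ θ ≤ 1 + θ * (t - 1) :=
      rpow_one_add_le_one_add_mul_self (by linarith) hθ.le h.le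
    have ht : 1 + (t - 1) = t := by ring
    rw [ht] at hb
    have hm : min θ 1 = θ := min_eq_left h.le
    rw [hm]; nlinarith

/-- Scaled upper bound: `A^α - B^α ≤ max α 1 * A^(α-1) * (A - B)` for `0 ≤ B ≤ A`, `A > 0`. -/
lemma aux_upper' {α A B : ℝ} (hα : 0 < α) (hB : 0 ≤ B) (hBA : B ≤ A) (hA : 0 < A) :
    A ^ α - B ^ α ≤ max α 1 * A ^ (α - 1) * (A - B) := by
  have ht0 : 0 ≤ B / A := div_nonneg hB hA.le
  have ht1 : B / A ≤ 1 := (div_le_one hA).mpr hBA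
  have key := aux_upper hα ht0 ht1
  have hBeq : B ^ α = A ^ α * (B / A) ^ α := by
    rw [← Real.mul_rpow hA.le ht0, mul_div_cancel₀ _ hA.ne']
  have hApos : 0 < A ^ α := Real.rpow_pos_of_pos hA α
  have hA1 : A ^ α = A ^ (α - 1) * A := by
    rw [← Real.rpow_add_one hA.ne' (α - 1), sub_add_cancel]
  have := mul_le_mul_of_nonneg_left key hApos.le
  calc A ^ α - B ^ α = A ^ α * (1 - (B / A) ^ α) := by rw [hBeq]; ring
    _ ≤ A ^ α * (max α 1 * (1 - B / A)) := this
    _ = max α 1 * A ^ (α - 1) * (A - B) := by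
        rw [hA1]; field_simp

/-- Scaled lower bound: `min θ 1 * A^(θ-1) * (A - B) ≤ A^θ - B^θ`. -/
lemma aux_lower' {θ A B : ℝ} (hθ : 0 < θ) (hB : 0 ≤ B) (hBA : B ≤ A) (hA : 0 < A) :
    min θ 1 * A ^ (θ - 1) * (A - B) ≤ A ^ θ - B ^ θ := by
  have ht0 : 0 ≤ B / A := div_nonneg hB hA.le
  have ht1 : B / A ≤ 1 := (div_le_one hA).mpr hBA
  have key := aux_lower hθ ht0 ht1
  have hBeq : B ^ θ = A ^ θ * (B / A) ^ θ := by
    rw [← Real.mul_rpow hA.le ht0, mul_div_cancel₀ _ hA.ne']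
  have hApos : 0 < A ^ θ := Real.rpow_pos_of_pos hA θ
  have hA1 : A ^ θ = A ^ (θ - 1) * A := by
    rw [← Real.rpow_add_one hA.ne' (θ - 1), sub_add_cancel]
  have := mul_le_mul_of_nonneg_left key hApos.le
  calc min θ 1 * A ^ (θ - 1) * (A - B) = A ^ θ * (min θ 1 * (1 - B / A)) := by
        rw [hA1]; field_simp
    _ ≤ A ^ θ * (1 - (B / A) ^ θ) := this
    _ = A ^ θ - B ^ θ := by rw [hBeq]; ring

/-- The RHS factor bound: `(A-B)^3 * (A^(s-1) - B^(s-1)) ≤ (a-b)^3 * (|a|^(s-2)*a - |b|^(s-2)*b)`. -/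
lemma aux_rhs {s : ℝ} (hs : 1 < s) (a b : ℝ) (hab : |b| < |a|) :
    (|a| - |b|) ^ 3 * (|a| ^ (s - 1) - |b| ^ (s - 1)) ≤
      (a - b) ^ 3 * (|a| ^ (s - 2) * a - |b| ^ (s - 2) * b) := by
  set A := |a| with hA
  set B := |b| with hB
  have hBpos : 0 ≤ B := abs_nonneg b
  have hApos : 0 < A := lt_of_le_of_lt hBpos hab
  have hE : 0 ≤ A ^ (s - 1) - B ^ (s - 1) := by
    have := Real.rpow_le_rpow hBpos hab.le (by linarith : (0:ℝ) ≤ s - 1)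
    linarith
  have hD : 0 < A - B := by linarith
  -- signed powers
  have hsa : |a| ^ (s - 2) * a = if 0 ≤ a then A ^ (s - 1) else -(A ^ (s - 1)) := by
    rcases le_or_gt 0 a with h | h
    · rw [if_pos h]
      rcases eq_or_lt_of_le h with rfl | h'
      · simp [hA]
        rw [Real.zero_rpow (by linarith : s - 1 ≠ 0)]
      · rw [hA, abs_of_pos h', ← Real.rpow_add_one h'.ne' (s - 2)]
        congr 1; ring
    · rw [if_neg (not_le.mpr h), hA, abs_of_neg h]
      have hkey : (-a) ^ (s - 1) = (-a) ^ (s - 2) * (-a) := by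
        rw [← Real.rpow_add_one (by linarith : -a ≠ 0) (s - 2)]
        congr 1; ring
      rw [hkey]; ring
  have hsb : |b| ^ (s - 2) * b = if 0 ≤ b then B ^ (s - 1) else -(B ^ (s - 1)) := by
    rcases le_or_gt 0 b with h | h
    · rw [if_pos h]
      rcases eq_or_lt_of_le h with rfl | h'
      · simp [hB]
        rw [Real.zero_rpow (by linarith : s - 1 ≠ 0)]
      · rw [hB, abs_of_pos h', ← Real.rpow_add_one h'.ne' (s - 2)]
        congr 1; ring
    · rw [if_neg (not_le.mpr h), hB, abs_of_neg h]
      have hkey : (-b) ^ (s - 1) = (-b) ^ (s - 2) * (-b) := by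
        rw [← Real.rpow_add_one (by linarith : -b ≠ 0) (s - 2)]
        congr 1; ring
      rw [hkey]; ring
  have hBs : 0 ≤ B ^ (s - 1) := Real.rpow_nonneg hBpos _
  rcases le_or_gt 0 a with ha | ha
  · -- a ≥ 0, so a = A
    have haA : a = A := (abs_of_nonneg ha).symm
    have hub : A - B ≤ a - b := by
      have : b ≤ B := le_abs_self b
      rw [haA] at *; linarith
    have hg : A ^ (s - 1) - B ^ (s - 1) ≤ |a| ^ (s - 2) * a - |b| ^ (s - 2) * b := by
      rw [hsa, if_pos ha, hsb]
      split <;> [linarith; linarith]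
    have h3 : (A - B) ^ 3 ≤ (a - b) ^ 3 := by
      apply pow_le_pow_left₀ hD.le hub
    calc (A - B) ^ 3 * (A ^ (s - 1) - B ^ (s - 1))
        ≤ (a - b) ^ 3 * (A ^ (s - 1) - B ^ (s - 1)) := by
          apply mul_le_mul_of_nonneg_right h3 hE
      _ ≤ (a - b) ^ 3 * (|a| ^ (s - 2) * a - |b| ^ (s - 2) * b) := by
          exact mul_le_mul_of_nonneg_left hg (pow_nonneg (le_trans hD.le hub) 3)
  · -- a < 0, so a = -A
    have haA : a = -A := by rw [hA, abs_of_neg ha]; ring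
    have hub : a - b ≤ -(A - B) := by
      have : -B ≤ b := neg_abs_le b
      rw [haA] at *; linarith
    have hg : |a| ^ (s - 2) * a - |b| ^ (s - 2) * b ≤ -(A ^ (s - 1) - B ^ (s - 1)) := by
      rw [hsa, if_neg (not_le.mpr ha), hsb]
      split <;> [linarith; linarith]
    have h3 : (a - b) ^ 3 ≤ -((A - B) ^ 3) := by
      have := pow_le_pow_left₀ hD.le (by linarith : A - B ≤ -(a - b)) 3
      have hodd : (-(a - b)) ^ 3 = -((a - b) ^ 3) := by ring
      linarith [this, hodd ▸ this]
    have hg' : |a| ^ (s - 2) * a - |b| ^ (s - 2) * b ≤ 0 := le_trans hg (by linarith)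
    nlinarith [pow_pos hD 3]

theorem stmt_2 (s p : ℝ) (hs : 1 < s) (hp : 2 ≤ p) :
    ∃ C > 0, ∀ a b : ℝ, |b| < |a| →
      (|a| ^ ((s + 2) / (2 * p)) - |b| ^ ((s + 2) / (2 * p))) ^ (2 * p)
        ≤ C * (a - b) ^ 3 * (|a| ^ (s - 2) * a - |b| ^ (s - 2) * b) := by
  set α := (s + 2) / (2 * p) with hαdef
  have hppos : 0 < p := by linarith
  have h2p : (0:ℝ) < 2 * p := by linarith
  have hαpos : 0 < α := div_pos (by linarith) h2p
  set M := max α 1 with hMdef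
  have hM1 : (1:ℝ) ≤ M := le_max_right _ _
  have hMpos : (0:ℝ) < M := by linarith
  set θ := min (s - 1) 1 with hθdef
  have hθpos : (0:ℝ) < θ := lt_min (by linarith) one_pos
  refine ⟨M ^ (2 * p) / θ, by positivity, fun a b hab => ?_⟩
  set A := |a| with hA
  set B := |b| with hB
  have hBnn : 0 ≤ B := abs_nonneg b
  have hApos : 0 < A := lt_of_le_of_lt hBnn hab
  have hD : 0 < A - B := by linarith
  -- Step 1 : LHS bound
  have h1 : A ^ α - B ^ α ≤ M * A ^ (α - 1) * (A - B) :=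
    aux_upper' hαpos hBnn hab.le hApos
  have hLnn : 0 ≤ A ^ α - B ^ α := by
    have := Real.rpow_le_rpow hBnn hab.le hαpos.le
    linarith
  have h2 : (A ^ α - B ^ α) ^ (2 * p) ≤ (M * A ^ (α - 1) * (A - B)) ^ (2 * p) :=
    Real.rpow_le_rpow hLnn h1 h2p.le
  have hAα1 : 0 ≤ A ^ (α - 1) := (Real.rpow_pos_of_pos hApos _).le
  have h3 : (M * A ^ (α - 1) * (A - B)) ^ (2 * p)
      = M ^ (2 * p) * A ^ ((α - 1) * (2 * p)) * (A - B) ^ (2 * p) := by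
    rw [Real.mul_rpow (by positivity) hD.le, Real.mul_rpow hMpos.le hAα1,
      ← Real.rpow_mul hApos.le]
  have hexp : (α - 1) * (2 * p) = s + 2 - 2 * p := by
    rw [hαdef]; field_simp
  have h4 : (A - B) ^ (2 * p) = (A - B) ^ (2 * p - 4) * (A - B) ^ (4:ℝ) := by
    rw [← Real.rpow_add hD]; norm_num
  have h5 : (A - B) ^ (2 * p - 4) ≤ A ^ (2 * p - 4) :=
    Real.rpow_le_rpow hD.le (by linarith) (by linarith)
  have h6 : A ^ (s + 2 - 2 * p) * A ^ (2 * p - 4) = A ^ (s - 2) := by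
    rw [← Real.rpow_add hApos]; congr 1; ring
  have hLHS : (A ^ α - B ^ α) ^ (2 * p) ≤ M ^ (2 * p) * A ^ (s - 2) * ((A - B) ^ (4:ℝ)) := by
    calc (A ^ α - B ^ α) ^ (2 * p)
        ≤ M ^ (2 * p) * A ^ ((α - 1) * (2 * p)) * (A - B) ^ (2 * p) := by
          rw [← h3]; exact h2
      _ = M ^ (2 * p) * A ^ (s + 2 - 2 * p) * ((A - B) ^ (2 * p - 4) * (A - B) ^ (4:ℝ)) := by
          rw [hexp, ← h4]
      _ ≤ M ^ (2 * p) * A ^ (s + 2 - 2 * p) * (A ^ (2 * p - 4) * (A - B) ^ (4:ℝ)) := by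
          apply mul_le_mul_of_nonneg_left
          · apply mul_le_mul_of_nonneg_right h5 (Real.rpow_nonneg hD.le _)
          · positivity
      _ = M ^ (2 * p) * A ^ (s - 2) * ((A - B) ^ (4:ℝ)) := by
          rw [← h6]; ring
  -- Step 2 : RHS bound
  have hRHS1 : θ * A ^ (s - 2) * (A - B) ≤ A ^ (s - 1) - B ^ (s - 1) := by
    have h := aux_lower' (by linarith : (0:ℝ) < s - 1) hBnn hab.le hApos
    have heq : s - 1 - 1 = s - 2 := by ring
    rw [heq] at h
    exact h
  have hRHS2 : (A - B) ^ 3 * (A ^ (s - 1) - B ^ (s - 1)) ≤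
      (a - b) ^ 3 * (|a| ^ (s - 2) * a - |b| ^ (s - 2) * b) := aux_rhs hs a b hab
  have hpow4 : (A - B) ^ (4:ℝ) = (A - B) ^ (4:ℕ) := by
    rw [show (4:ℝ) = ((4:ℕ):ℝ) by norm_num, Real.rpow_natCast]
  have hC3nn : 0 ≤ M ^ (2 * p) / θ * (A - B) ^ 3 := by positivity
  have hMid : M ^ (2 * p) * A ^ (s - 2) * ((A - B) ^ (4:ℝ))
      ≤ M ^ (2 * p) / θ * ((A - B) ^ 3 * (A ^ (s - 1) - B ^ (s - 1))) := by
    have step : M ^ (2 * p) / θ * (A - B) ^ 3 * (θ * A ^ (s - 2) * (A - B))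
        ≤ M ^ (2 * p) / θ * (A - B) ^ 3 * (A ^ (s - 1) - B ^ (s - 1)) :=
      mul_le_mul_of_nonneg_left hRHS1 hC3nn
    calc M ^ (2 * p) * A ^ (s - 2) * ((A - B) ^ (4:ℝ))
        = M ^ (2 * p) / θ * (A - B) ^ 3 * (θ * A ^ (s - 2) * (A - B)) := by
          rw [hpow4]; field_simp
      _ ≤ M ^ (2 * p) / θ * (A - B) ^ 3 * (A ^ (s - 1) - B ^ (s - 1)) := step
      _ = M ^ (2 * p) / θ * ((A - B) ^ 3 * (A ^ (s - 1) - B ^ (s - 1))) := by ring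
  have hFin : M ^ (2 * p) / θ * ((A - B) ^ 3 * (A ^ (s - 1) - B ^ (s - 1)))
      ≤ M ^ (2 * p) / θ * (a - b) ^ 3 * (|a| ^ (s - 2) * a - |b| ^ (s - 2) * b) := by
    have := mul_le_mul_of_nonneg_left hRHS2 (by positivity : (0:ℝ) ≤ M ^ (2 * p) / θ)
    linarith [this]
  calc (A ^ α - B ^ α) ^ (2 * p)
      ≤ M ^ (2 * p) * A ^ (s - 2) * ((A - B) ^ (4:ℝ)) := hLHS
    _ ≤ M ^ (2 * p) / θ * ((A - B) ^ 3 * (A ^ (s - 1) - B ^ (s - 1))) := hMid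
    _ ≤ M ^ (2 * p) / θ * (a - b) ^ 3 * (|a| ^ (s - 2) * a - |b| ^ (s - 2) * b) := hFin
end

section
/- Let s > 1 and p ≥ 2. Define g : (−1,1) → ℝ by g(λ) = (1 − |λ|^{(s+2)/(2p)})^{2p} / ((1 − λ)³·(1 − |λ|^{s−2}·λ)). Then g is bounded above on (−1,1): sup_{λ ∈ (−1,1)} g(λ) < ∞. -/
theorem stmt_3 (s p : ℝ) (hs : 1 < s) (hp : 2 ≤ p) :
    ∃ M : ℝ, ∀ lam ∈ Set.Ioo (-1 : ℝ) 1,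
      (1 - |lam| ^ ((s + 2) / (2 * p))) ^ (2 * p) /
        ((1 - lam) ^ 3 * (1 - |lam| ^ (s - 2) * lam)) ≤ M := by
  set α := (s + 2) / (2 * p) with hα
  have hp0 : (0:ℝ) < p := by linarith
  have h2p : (0:ℝ) < 2 * p := by linarith
  have hα0 : 0 < α := div_pos (by linarith) h2p
  set c : ℝ := min 1 (s - 1) / 2 with hc
  have hc0 : 0 < c := by
    apply div_pos _ two_pos
    exact lt_min one_pos (by linarith)
  have hc1 : c ≤ 1 / 2 := by
    apply div_le_div_of_nonneg_right (min_le_left _ _) (by norm_num)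
  set A : ℝ := (max α 1) ^ (2 * p) with hA
  have hA0 : 0 < A := Real.rpow_pos_of_pos (lt_of_lt_of_le one_pos (le_max_right _ _)) _
  refine ⟨A * 2 ^ (2 * p) / c, fun lam hlam => ?_⟩
  obtain ⟨hl1, hl2⟩ := hlam
  set t := |lam| with ht
  have ht0 : 0 ≤ t := abs_nonneg _
  have ht1 : t < 1 := abs_lt.mpr ⟨hl1, hl2⟩
  have hlt : lam ≤ t := le_abs_self _
  have h1l : 0 < 1 - lam := by linarith
  have h1l2 : 1 - lam ≤ 2 := by linarith
  -- numerator bound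
  have htα : t ^ α ≤ 1 := Real.rpow_le_one ht0 ht1.le hα0.le
  have hnum1 : 1 - t ^ α ≤ max α 1 * (1 - t) := by
    rcases eq_or_lt_of_le ht0 with h0 | h0
    · rw [← h0, Real.zero_rpow hα0.ne']
      have : (1:ℝ) ≤ max α 1 := le_max_right _ _
      nlinarith
    rcases le_or_gt α 1 with hα1 | hα1
    · have : t ^ (1:ℝ) ≤ t ^ α := Real.rpow_le_rpow_of_exponent_ge h0 ht1.le hα1
      rw [Real.rpow_one] at this
      have hm : (1:ℝ) ≤ max α 1 := le_max_right _ _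
      nlinarith
    · have hb : 1 + α * (t - 1) ≤ (1 + (t - 1)) ^ α :=
        one_add_mul_self_le_rpow_one_add (by linarith) hα1.le
      rw [show 1 + (t - 1) = t by ring] at hb
      have hm : α ≤ max α 1 := le_max_left _ _
      nlinarith
  have hnum2 : 1 - t ^ α ≤ max α 1 * (1 - lam) := by
    refine hnum1.trans ?_
    have hm : (0:ℝ) < max α 1 := lt_of_lt_of_le one_pos (le_max_right _ _)
    nlinarith
  have hnum0 : 0 ≤ 1 - t ^ α := by linarith
  have hnum : (1 - t ^ α) ^ (2 * p) ≤ A * (1 - lam) ^ (2 * p) := by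
    calc (1 - t ^ α) ^ (2 * p) ≤ (max α 1 * (1 - lam)) ^ (2 * p) :=
          Real.rpow_le_rpow hnum0 hnum2 h2p.le
      _ = A * (1 - lam) ^ (2 * p) := by
          rw [Real.mul_rpow (le_of_lt (lt_of_lt_of_le one_pos (le_max_right _ _))) h1l.le]
  -- denominator bound
  have hden1 : c * (1 - lam) ≤ 1 - t ^ (s - 2) * lam := by
    rcases le_or_gt lam 0 with hneg | hpos
    · have h1 : t ^ (s - 2) * lam ≤ 0 :=
        mul_nonpos_of_nonneg_of_nonpos (Real.rpow_nonneg ht0 _) hneg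
      have h2 : c * (1 - lam) ≤ 1 := by nlinarith
      linarith
    · have htl : t = lam := abs_of_pos hpos
      have h1 : t ^ (s - 2) * lam = lam ^ (s - 1) := by
        rw [htl, show s - 1 = (s - 2) + 1 by ring, Real.rpow_add_one hpos.ne']
      rw [h1]
      have key : lam ^ (s - 1) ≤ 1 - min 1 (s - 1) * (1 - lam) := by
        rcases le_or_gt (s - 1) 1 with hs1 | hs1
        · have hb : (1 + (lam - 1)) ^ (s - 1) ≤ 1 + (s - 1) * (lam - 1) :=
            rpow_one_add_le_one_add_mul_self (by linarith) (by linarith) hs1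
          rw [show 1 + (lam - 1) = lam by ring] at hb
          have : min 1 (s - 1) = s - 1 := min_eq_right hs1
          rw [this]; linarith
        · have hb : lam ^ (s - 1) ≤ lam ^ (1:ℝ) :=
            Real.rpow_le_rpow_of_exponent_ge hpos hl2.le hs1.le
          rw [Real.rpow_one] at hb
          have : min 1 (s - 1) = 1 := min_eq_left hs1.le
          rw [this]; linarith
      nlinarith
  have hden0 : 0 < 1 - t ^ (s - 2) * lam := lt_of_lt_of_le (by positivity) hden1
  have hD0 : 0 < (1 - lam) ^ 3 * (1 - t ^ (s - 2) * lam) := by positivity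
  rw [div_le_div_iff₀ hD0 hc0]
  have hDlow : c * (1 - lam) ^ 4 ≤ (1 - lam) ^ 3 * (1 - t ^ (s - 2) * lam) := by
    have h3 : (0:ℝ) < (1 - lam) ^ 3 := by positivity
    calc c * (1 - lam) ^ 4 = (1 - lam) ^ 3 * (c * (1 - lam)) := by ring
      _ ≤ (1 - lam) ^ 3 * (1 - t ^ (s - 2) * lam) := by
          exact mul_le_mul_of_nonneg_left hden1 h3.le
  -- combine
  have hsplit : (1 - lam) ^ (2 * p) ≤ 2 ^ (2 * p) * (1 - lam) ^ (4:ℝ) := by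
    have h1 : (1 - lam) ^ (2 * p) = (1 - lam) ^ (2 * p - 4) * (1 - lam) ^ (4:ℝ) := by
      rw [← Real.rpow_add h1l]; ring_nf
    rw [h1]
    have h2 : (1 - lam) ^ (2 * p - 4) ≤ 2 ^ (2 * p - 4) :=
      Real.rpow_le_rpow h1l.le h1l2 (by linarith)
    have h3 : (2:ℝ) ^ (2 * p - 4) ≤ 2 ^ (2 * p) :=
      Real.rpow_le_rpow_of_exponent_le one_le_two (by linarith)
    have h4 : (0:ℝ) ≤ (1 - lam) ^ (4:ℝ) := Real.rpow_nonneg h1l.le _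
    exact mul_le_mul_of_nonneg_right (h2.trans h3) h4
  have h4eq : (1 - lam) ^ (4:ℝ) = (1 - lam) ^ (4:ℕ) := by
    rw [← Real.rpow_natCast]; norm_num
  calc (1 - t ^ α) ^ (2 * p) * c
      ≤ (A * (1 - lam) ^ (2 * p)) * c := by
        exact mul_le_mul_of_nonneg_right hnum hc0.le
    _ ≤ (A * (2 ^ (2 * p) * (1 - lam) ^ (4:ℝ))) * c := by
        exact mul_le_mul_of_nonneg_right (mul_le_mul_of_nonneg_left hsplit hA0.le) hc0.le
    _ = A * 2 ^ (2 * p) * (c * (1 - lam) ^ 4) := by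
        rw [h4eq]; push_cast; ring
    _ ≤ A * 2 ^ (2 * p) * ((1 - lam) ^ 3 * (1 - t ^ (s - 2) * lam)) := by
        refine mul_le_mul_of_nonneg_left hDlow ?_
        positivity
end

section
/- Let γ, k > 0 and let w : [0,∞) → [0,∞) be a Lipschitz function with w(t)′ ≥ −k·w(t)^γ at each point of differentiability and w(0) > 0. If γ = 1 then w(t) ≥ w(0)·e^{−kt} for all t ≥ 0; if γ > 1 then w(t) ≥ (w(0)^{1−γ} + k(γ−1)t)^{−1/(γ−1)} for all t ≥ 0. -/
/-!
Let `B` be the explicit solution of `B' = -k B ^ γ` with `B 0 = w 0`, namely `w 0 * exp (-k t)`,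
resp. `(w 0 ^ (1 - γ) + k (γ - 1) t) ^ (-1 / (γ - 1))`. Since `x ↦ -k x ^ γ` is antitone on
`[0, ∞)`, wherever `w < B` we get `w' ≥ -k w ^ γ ≥ -k B ^ γ = B'`. So the absolutely continuous
function `min (w - B) 0` has nonnegative derivative wherever it is differentiable (where `w ≥ B`
it sits at its maximum `0`); by the fundamental theorem of calculus for absolutely continuous
functions it is nondecreasing, and it starts at `0`, so `B ≤ w`.
-/

open Set Filter Topology MeasureTheory
open scoped NNReal

theorem LipschitzWith.comp_absolutelyContinuousOnInterval {X Y : Type*} [PseudoMetricSpace X]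
    [PseudoMetricSpace Y] {φ : X → Y} {K : ℝ≥0} {f : ℝ → X} {a b : ℝ} (hφ : LipschitzWith K φ)
    (hf : AbsolutelyContinuousOnInterval f a b) :
    AbsolutelyContinuousOnInterval (φ ∘ f) a b := by
  refine squeeze_zero (fun _ ↦ Finset.sum_nonneg fun _ _ ↦ dist_nonneg) (fun E ↦ ?_)
    (by simpa using Tendsto.const_mul (K : ℝ) hf)
  rw [Finset.mul_sum]
  gcongr
  exact hφ.dist_le_mul _ _

theorem AbsolutelyContinuousOnInterval.le_of_deriv_nonneg {f : ℝ → ℝ} {a b : ℝ}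
    (hf : AbsolutelyContinuousOnInterval f a b) (hab : a ≤ b)
    (hd : ∀ x ∈ Ioo a b, 0 ≤ deriv f x) : f a ≤ f b := by
  have : 0 ≤ ∫ x in a..b, deriv f x := by
    refine intervalIntegral.integral_nonneg_of_ae_restrict hab ?_
    rw [← Measure.restrict_congr_set Ioo_ae_eq_Icc]
    filter_upwards [ae_restrict_mem measurableSet_Ioo] using hd
  linarith [hf.integral_deriv_eq_sub]

theorem AbsolutelyContinuousOnInterval.nonneg_of_deriv_nonneg_of_neg {g : ℝ → ℝ} {a b : ℝ}
    (hg : AbsolutelyContinuousOnInterval g a b) (hab : a ≤ b) (ha : 0 ≤ g a)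
    (hd : ∀ x ∈ Ioo a b, g x < 0 → DifferentiableAt ℝ g x → 0 ≤ deriv g x) : 0 ≤ g b := by
  set h : ℝ → ℝ := fun x ↦ min (g x) 0
  have hh : AbsolutelyContinuousOnInterval h a b :=
    (LipschitzWith.id.min_const 0).comp_absolutelyContinuousOnInterval hg
  suffices h a ≤ h b by simpa [h, ha] using this
  refine hh.le_of_deriv_nonneg hab fun x hx ↦ ?_
  rcases lt_or_ge (g x) 0 with hgx | hgx
  · have hcont : ContinuousAt g x :=
      (uIcc_of_le hab ▸ hg.continuousOn).continuousAt (Icc_mem_nhds hx.1 hx.2)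
    have hhg : h =ᶠ[𝓝 x] g :=
      (hcont.eventually_lt continuousAt_const hgx).mono fun y hy ↦ min_eq_left hy.le
    rw [hhg.deriv_eq]
    by_cases hdiff : DifferentiableAt ℝ g x
    · exact hd x hx hgx hdiff
    · exact (deriv_zero_of_not_differentiableAt hdiff).ge
  · have hmax : IsLocalMax h x :=
      Filter.Eventually.of_forall fun y ↦ by simp [h, hgx]
    exact hmax.deriv_eq_zero.ge

theorem le_of_antitoneOn_of_deriv_le {f w B : ℝ → ℝ} {K : ℝ≥0} (hf : AntitoneOn f (Ici 0))
    (hw : LipschitzOnWith K w (Ici 0)) (hw₀ : ∀ t ≥ 0, 0 ≤ w t)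
    (hw' : ∀ t > 0, ∀ d, HasDerivAt w d t → f (w t) ≤ d)
    (hB : ContDiffOn ℝ 1 B (Ici 0)) (hB' : ∀ t > 0, deriv B t ≤ f (B t))
    (h0 : B 0 ≤ w 0) {t : ℝ} (ht : 0 ≤ t) : B t ≤ w t := by
  have hsub : uIcc 0 t ⊆ Ici 0 := by rw [uIcc_of_le ht]; exact Icc_subset_Ici_self
  have hg : AbsolutelyContinuousOnInterval (w - B) 0 t :=
    (hw.mono hsub).absolutelyContinuousOnInterval.sub (hB.mono hsub).absolutelyContinuousOnInterval
  suffices 0 ≤ (w - B) t by simpa using this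
  refine hg.nonneg_of_deriv_nonneg_of_neg ht (by simpa using h0) fun x hx hneg hdiff ↦ ?_
  have hx₀ : 0 < x := hx.1
  have hwx : w x < B x := by simpa using hneg
  have hBdiff : DifferentiableAt ℝ B x :=
    (hB.differentiableOn one_ne_zero x hx₀.le).differentiableAt (Ici_mem_nhds hx₀)
  have hwd : HasDerivAt w (deriv (w - B) x + deriv B x) x := by
    simpa using hdiff.hasDerivAt.add hBdiff.hasDerivAt
  have hfwB : f (B x) ≤ f (w x) := hf (hw₀ x hx₀.le) ((hw₀ x hx₀.le).trans hwx.le) hwx.le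
  linarith [hw' x hx₀ _ hwd, hB' x hx₀]

theorem antitoneOn_neg_mul_rpow {k γ : ℝ} (hk : 0 ≤ k) (hγ : 0 ≤ γ) :
    AntitoneOn (fun x : ℝ ↦ -k * x ^ γ) (Ici 0) := fun x hx _ _ hxy ↦ by
  nlinarith [Real.rpow_le_rpow hx hxy hγ]

theorem hasDerivAt_rpow_neg_inv_sub_one {γ k c t : ℝ} (hγ : 1 < γ)
    (ht : 0 < c + k * (γ - 1) * t) :
    HasDerivAt (fun s ↦ (c + k * (γ - 1) * s) ^ (-(1 / (γ - 1))))
      (-k * ((c + k * (γ - 1) * t) ^ (-(1 / (γ - 1)))) ^ γ) t := by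
  have hγ₁ : γ - 1 ≠ 0 := by linarith
  have hlin : HasDerivAt (fun s ↦ c + k * (γ - 1) * s) (k * (γ - 1)) t := by
    simpa using ((hasDerivAt_id t).const_mul (k * (γ - 1))).const_add c
  convert hlin.rpow_const (p := -(1 / (γ - 1))) (Or.inl ht.ne') using 1
  rw [← Real.rpow_mul ht.le]
  have : -(1 / (γ - 1)) * γ = -(1 / (γ - 1)) - 1 := by field_simp; ring
  rw [this]
  field_simp

theorem stmt_6 (γ k : ℝ) (hγ : 1 ≤ γ) (hk : 0 < k) (w : ℝ → ℝ) (K : ℝ≥0)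
    (hw : LipschitzOnWith K w (Set.Ici 0)) (hwpos : ∀ t ≥ (0 : ℝ), 0 ≤ w t)
    (hwsup : ∀ t ≥ (0 : ℝ), ∀ d : ℝ, HasDerivAt w d t → -k * w t ^ γ ≤ d)
    (h0 : 0 < w 0) :
    (γ = 1 → ∀ t ≥ (0 : ℝ), w 0 * Real.exp (-k * t) ≤ w t) ∧
    (1 < γ → ∀ t ≥ (0 : ℝ),
      (w 0 ^ (1 - γ) + k * (γ - 1) * t) ^ (-(1 / (γ - 1))) ≤ w t) := by
  have hf := antitoneOn_neg_mul_rpow hk.le (zero_le_one.trans hγ)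
  have hw' : ∀ t > 0, ∀ d, HasDerivAt w d t → -k * w t ^ γ ≤ d := fun t ht ↦ hwsup t ht.le
  refine ⟨fun hγ₁ t ht ↦ ?_, fun hγ₁ t ht ↦ ?_⟩
  · subst hγ₁
    refine le_of_antitoneOn_of_deriv_le (B := fun s ↦ w 0 * Real.exp (-k * s)) hf hw hwpos hw'
      (by fun_prop : ContDiff ℝ 1 _).contDiffOn (fun s _ ↦ le_of_eq ?_) (by simp) ht
    have hB := ((hasDerivAt_id s).const_mul (-k)).exp.const_mul (w 0)
    simp only [id, mul_one] at hB
    rw [hB.deriv, Real.rpow_one]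
    ring
  · have hbase : ∀ s ≥ (0 : ℝ), 0 < w 0 ^ (1 - γ) + k * (γ - 1) * s := fun s hs ↦ by
      have := Real.rpow_pos_of_pos h0 (1 - γ)
      have : 0 ≤ k * (γ - 1) * s := by have := hγ₁.le; positivity
      linarith
    have hB0 : (w 0 ^ (1 - γ) + k * (γ - 1) * 0) ^ (-(1 / (γ - 1))) = w 0 := by
      have : (1 - γ) * -(1 / (γ - 1)) = 1 := by field_simp [show γ - 1 ≠ 0 by linarith]; ring
      rw [mul_zero, add_zero, ← Real.rpow_mul h0.le, this, Real.rpow_one]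
    refine le_of_antitoneOn_of_deriv_le hf hw hwpos hw'
      (ContDiffOn.rpow_const_of_ne (by fun_prop) fun s hs ↦ (hbase s hs).ne')
      (fun s hs ↦ ((hasDerivAt_rpow_neg_inv_sub_one hγ₁ (hbase s hs.le)).deriv).le) hB0.le ht
end

section
/- Let α ∈ (0,1), τ > 0, and let f : [0, τ+1] → ℝ be Lipschitz continuous with Lipschitz constant L. If (t_j) is a sequence in (0, τ) with t_j → τ, then ∫₀^{t_j} (f(t_j) − f(ρ))/(t_j − ρ)^{1+α} dρ → ∫₀^{τ} (f(τ) − f(ρ))/(τ − ρ)^{1+α} dρ as j → ∞. -/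
open intervalIntegral Filter MeasureTheory
open scoped NNReal

private lemma aux_dct (G : ℕ → ℝ → ℝ) (g bound : ℝ → ℝ)
    (hmeas : ∀ᶠ j in Filter.atTop,
      MeasureTheory.AEStronglyMeasurable (fun σ => G j σ)
        (MeasureTheory.volume.restrict (Set.Ioo (0:ℝ) 1)))
    (hb : ∀ᶠ j in Filter.atTop,
      ∀ᵐ σ ∂(MeasureTheory.volume.restrict (Set.Ioo (0:ℝ) 1)), ‖G j σ‖ ≤ bound σ)
    (hbi : MeasureTheory.Integrable bound (MeasureTheory.volume.restrict (Set.Ioo (0:ℝ) 1)))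
    (hl : ∀ᵐ σ ∂(MeasureTheory.volume.restrict (Set.Ioo (0:ℝ) 1)),
      Filter.Tendsto (fun j => G j σ) Filter.atTop (nhds (g σ))) :
    Filter.Tendsto (fun j => ∫ σ in Set.Ioo (0:ℝ) 1, G j σ) Filter.atTop
      (nhds (∫ σ in Set.Ioo (0:ℝ) 1, g σ)) :=
  MeasureTheory.tendsto_integral_filter_of_dominated_convergence bound hmeas hb hbi hl

set_option maxHeartbeats 1000000 in
theorem stmt_10 (α : ℝ) (hα : α ∈ Set.Ioo (0 : ℝ) 1) (τ : ℝ) (hτ : 0 < τ)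
    (f : ℝ → ℝ) (L : ℝ≥0) (hf : LipschitzOnWith L f (Set.Icc 0 (τ + 1)))
    (t : ℕ → ℝ) (ht : ∀ j, t j ∈ Set.Ioo 0 τ) (htlim : Tendsto t atTop (nhds τ)) :
    Tendsto (fun j => ∫ ρ in (0 : ℝ)..(t j), (f (t j) - f ρ) / (t j - ρ) ^ (1 + α))
      atTop (nhds (∫ ρ in (0 : ℝ)..τ, (f τ - f ρ) / (τ - ρ) ^ (1 + α))) := by
  obtain ⟨hα0, hα1⟩ := hα
  have hfc : ContinuousOn f (Set.Icc 0 (τ + 1)) := hf.continuousOn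
  set F : ℝ → ℝ → ℝ := fun s σ => (f s - f (s * σ)) / (s - s * σ) ^ (1 + α) with hFdef
  -- substitution ρ = s * σ
  have subst : ∀ s : ℝ, (∫ ρ in (0:ℝ)..s, (f s - f ρ) / (s - ρ) ^ (1 + α))
      = s * ∫ σ in Set.Ioo (0:ℝ) 1, F s σ := by
    intro s
    have h := intervalIntegral.smul_integral_comp_mul_left
      (a := 0) (b := 1) (fun ρ => (f s - f ρ) / (s - ρ) ^ (1 + α)) s
    rw [mul_zero, mul_one] at h
    rw [← h, smul_eq_mul, intervalIntegral.integral_of_le zero_le_one,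
      ← Measure.restrict_congr_set Ioo_ae_eq_Ioc]
  -- measurability of F s on Ioo 0 1
  have hmeas : ∀ s ∈ Set.Ioc (0:ℝ) τ,
      AEStronglyMeasurable (F s) (volume.restrict (Set.Ioo (0:ℝ) 1)) := by
    intro s hs
    have hconts : ContinuousOn (F s) (Set.Ioo 0 1) := by
      have h1 : ContinuousOn (fun σ : ℝ => f (s * σ)) (Set.Ioo 0 1) := by
        refine hfc.comp ((continuous_const.mul continuous_id).continuousOn) ?_
        intro σ hσ
        exact ⟨by nlinarith [hσ.1, hσ.2, hs.1, hs.2], by nlinarith [hσ.1, hσ.2, hs.1, hs.2]⟩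
      have h2 : Continuous fun σ : ℝ => (s - s * σ) ^ (1 + α) :=
        (continuous_const.sub (continuous_const.mul continuous_id)).rpow_const
          (fun x => Or.inr (by linarith))
      refine (continuousOn_const.sub h1).div h2.continuousOn ?_
      intro σ hσ
      exact (Real.rpow_pos_of_pos (by nlinarith [hσ.2, hs.1]) _).ne'
    exact hconts.aestronglyMeasurable measurableSet_Ioo
  -- pointwise limit
  have h_lim : ∀ᵐ σ ∂(volume.restrict (Set.Ioo (0:ℝ) 1)),
      Tendsto (fun j => F (t j) σ) atTop (nhds (F τ σ)) := by
    filter_upwards [ae_restrict_mem measurableSet_Ioo] with σ hσ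
    have hA : ContinuousAt f τ :=
      hfc.continuousAt (Icc_mem_nhds (by linarith) (by linarith))
    have hB : ContinuousAt (fun s : ℝ => f (s * σ)) τ := by
      have hmem : Set.Icc (0:ℝ) (τ+1) ∈ nhds (τ * σ) :=
        Icc_mem_nhds (by nlinarith [hσ.1]) (by nlinarith [hσ.2])
      have hmul : ContinuousAt (fun s : ℝ => s * σ) τ :=
        (continuous_id.mul continuous_const).continuousAt
      exact ContinuousAt.comp (x := τ) (g := f) (hfc.continuousAt hmem) hmul
    have hC : ContinuousAt (fun s : ℝ => (s - s * σ) ^ (1 + α)) τ :=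
      ((continuous_id.sub (continuous_id.mul continuous_const)).rpow_const
        (fun x => Or.inr (by linarith))).continuousAt
    have hne : (τ - τ * σ) ^ (1 + α) ≠ 0 :=
      (Real.rpow_pos_of_pos (by nlinarith [hσ.2]) _).ne'
    have : ContinuousAt (fun s : ℝ => F s σ) τ := (hA.sub hB).div hC hne
    exact this.tendsto.comp htlim
  -- uniform bound
  set bound : ℝ → ℝ := fun σ => (L : ℝ) * (τ/2) ^ (-α) * (1 - σ) ^ (-α) with hbdef
  have h_bound : ∀ᶠ j in atTop, ∀ᵐ σ ∂(volume.restrict (Set.Ioo (0:ℝ) 1)),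
      ‖F (t j) σ‖ ≤ bound σ := by
    have hev : ∀ᶠ j in atTop, τ/2 < t j :=
      htlim.eventually (eventually_gt_nhds (by linarith))
    filter_upwards [hev] with j hj
    filter_upwards [ae_restrict_mem measurableSet_Ioo] with σ hσ
    set s := t j with hsdef
    have hs0 : 0 < s := (ht j).1
    have hsτ : s < τ := (ht j).2
    have hx : 0 < s - s * σ := by nlinarith [hσ.2]
    have hden : 0 < (s - s * σ) ^ (1 + α) := Real.rpow_pos_of_pos hx _
    have hnum : |f s - f (s * σ)| ≤ (L : ℝ) * (s - s * σ) := by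
      have hd := hf.dist_le_mul s ⟨hs0.le, by linarith⟩ (s * σ)
        ⟨by nlinarith [hσ.1], by nlinarith [hσ.2]⟩
      rw [Real.dist_eq, Real.dist_eq, abs_of_pos hx] at hd
      exact hd
    have hxx : (s - s * σ) / (s - s * σ) ^ (1 + α) = (s - s * σ) ^ (-α) := by
      have h := Real.rpow_sub hx 1 (1 + α)
      rw [Real.rpow_one] at h
      rw [← h]
      norm_num
    have hcmp : (s - s * σ) ^ (-α) ≤ ((τ/2) * (1 - σ)) ^ (-α) := by
      refine Real.rpow_le_rpow_of_nonpos (by nlinarith [hσ.2]) (by nlinarith [hσ.2]) (by linarith)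
    calc ‖F s σ‖ = |f s - f (s * σ)| / (s - s * σ) ^ (1 + α) := by
          rw [Real.norm_eq_abs, abs_div, abs_of_pos hden]
      _ ≤ ((L : ℝ) * (s - s * σ)) / (s - s * σ) ^ (1 + α) := by gcongr
      _ = (L : ℝ) * ((s - s * σ) / (s - s * σ) ^ (1 + α)) := by ring
      _ = (L : ℝ) * (s - s * σ) ^ (-α) := by rw [hxx]
      _ ≤ (L : ℝ) * ((τ/2) * (1 - σ)) ^ (-α) := by
          exact mul_le_mul_of_nonneg_left hcmp L.coe_nonneg
      _ = bound σ := by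
          simp only [hbdef]
          rw [Real.mul_rpow (by linarith) (by nlinarith [hσ.2])]
          ring
  -- integrability of the bound
  have bound_int : Integrable bound (volume.restrict (Set.Ioo (0:ℝ) 1)) := by
    have h1 : IntervalIntegrable (fun x : ℝ => x ^ (-α)) volume 0 1 :=
      intervalIntegral.intervalIntegrable_rpow' (by linarith)
    have h2 := (h1.comp_sub_left 1).symm
    rw [show (1:ℝ) - 1 = 0 by norm_num, sub_zero] at h2
    have h3 := h2.const_mul ((L : ℝ) * (τ/2) ^ (-α))
    have h4 : IntegrableOn bound (Set.Ioc (0:ℝ) 1) volume := by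
      have := (intervalIntegrable_iff_integrableOn_Ioc_of_le zero_le_one).mp h3
      simpa [hbdef, mul_assoc] using this
    exact h4.mono_set Set.Ioo_subset_Ioc_self
  have hmeas' : ∀ᶠ j in atTop,
      AEStronglyMeasurable (fun σ => F (t j) σ) (volume.restrict (Set.Ioo (0:ℝ) 1)) :=
    Eventually.of_forall fun j => hmeas _ ⟨(ht j).1, (ht j).2.le⟩
  clear_value F bound
  have key : Tendsto (fun j => ∫ σ in Set.Ioo (0:ℝ) 1, F (t j) σ) atTop
      (nhds (∫ σ in Set.Ioo (0:ℝ) 1, F τ σ)) :=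
    aux_dct (fun j σ => F (t j) σ) (fun σ => F τ σ) bound hmeas' h_bound bound_int h_lim
  simp_rw [subst]
  exact htlim.mul key
end

section
/- Let α ∈ (0,1), τ > 0, and f : [0,τ] → ℝ Lipschitz with f ≥ 0 on (0,τ), f(τ) = 0, and f(0) > 0. Then the Caputo-type expression (f(τ) − f(0))/τ^α + α·∫₀^τ (f(τ) − f(ρ))/(τ−ρ)^{1+α} dρ is at most −f(0)/τ^α < 0. -/
open intervalIntegral
open scoped NNReal

theorem stmt_11 (α : ℝ) (hα : α ∈ Set.Ioo (0 : ℝ) 1) (τ : ℝ) (hτ : 0 < τ)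
    (f : ℝ → ℝ) (L : ℝ≥0) (hf : LipschitzOnWith L f (Set.Icc 0 τ))
    (hfpos : ∀ ρ ∈ Set.Ioo 0 τ, 0 ≤ f ρ) (hfτ : f τ = 0) (hf0 : 0 < f 0) :
    (f τ - f 0) / τ ^ α + α * (∫ ρ in (0 : ℝ)..τ, (f τ - f ρ) / (τ - ρ) ^ (1 + α))
      ≤ -(f 0) / τ ^ α ∧ -(f 0) / τ ^ α < 0 := by
  have hτα : 0 < τ ^ α := Real.rpow_pos_of_pos hτ α
  constructor
  · have hI : (∫ ρ in (0 : ℝ)..τ, (f τ - f ρ) / (τ - ρ) ^ (1 + α)) ≤ 0 := by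
      have : 0 ≤ ∫ ρ in (0 : ℝ)..τ, -((f τ - f ρ) / (τ - ρ) ^ (1 + α)) := by
        apply intervalIntegral.integral_nonneg hτ.le
        intro u hu
        rw [hfτ, neg_nonneg]
        rcases eq_or_lt_of_le hu.2 with h | h
        · simp [h, hfτ]
        · have hfu : 0 ≤ f u := by
            rcases eq_or_lt_of_le hu.1 with h0 | h0
            · simpa [← h0] using hf0.le
            · exact hfpos u ⟨h0, h⟩
          apply div_nonpos_of_nonpos_of_nonneg
          · linarith
          · exact (Real.rpow_pos_of_pos (by linarith) _).le
      rw [intervalIntegral.integral_neg] at this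
      linarith
    have : α * (∫ ρ in (0 : ℝ)..τ, (f τ - f ρ) / (τ - ρ) ^ (1 + α)) ≤ 0 :=
      mul_nonpos_of_nonneg_of_nonpos hα.1.le hI
    simp only [hfτ] at this ⊢
    have h2 : (0 - f 0) / τ ^ α = -(f 0) / τ ^ α := by ring
    linarith
  · exact div_neg_of_neg_of_pos (by linarith) hτα
end

section
/- Let s ≥ 1 and a, b ≥ 0. Then (a^s − b^s)·(a − b) ≥ C·(a^{(s+1)/2} − b^{(s+1)/2})², where C > 0 is a constant depending only on s (one may take C = 4s/(s+1)²). -/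
open Real

lemma hd_sinh (c y : ℝ) : HasDerivAt (fun y => c * Real.sinh y - Real.sinh (c * y))
    (c * Real.cosh y - Real.cosh (c * y) * c) y := by
  have h1 : HasDerivAt (fun y : ℝ => c * y) c y := by
    simpa using (hasDerivAt_id y).const_mul c
  exact ((Real.hasDerivAt_sinh y).const_mul c).sub ((Real.hasDerivAt_sinh (c * y)).comp y h1)

lemma sinh_mul_le (c x : ℝ) (hc0 : 0 ≤ c) (hc1 : c ≤ 1) (hx : 0 ≤ x) :
    Real.sinh (c * x) ≤ c * Real.sinh x := by
  have h : MonotoneOn (fun y => c * Real.sinh y - Real.sinh (c * y)) (Set.Ici (0:ℝ)) := by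
    apply monotoneOn_of_deriv_nonneg (convex_Ici 0)
    · exact Continuous.continuousOn (by continuity)
    · intro y hy
      exact (hd_sinh c y).differentiableAt.differentiableWithinAt
    · intro y hy
      simp only [interior_Ici, Set.mem_Ioi] at hy
      rw [(hd_sinh c y).deriv]
      have : Real.cosh (c * y) ≤ Real.cosh y := by
        rw [Real.cosh_le_cosh, abs_of_nonneg (mul_nonneg hc0 hy.le), abs_of_nonneg hy.le]
        nlinarith
      nlinarith [this]
  have := h (Set.self_mem_Ici) (Set.mem_Ici.2 hx) hx
  simp only [Real.sinh_zero, mul_zero, sub_zero] at this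
  linarith

open Real

lemma prodlem (a b : ℝ) : Real.sinh (a + b) * Real.sinh (a - b)
    = Real.sinh a ^ 2 - Real.sinh b ^ 2 := by
  rw [Real.sinh_add, Real.sinh_sub]
  nlinarith [Real.cosh_sq a, Real.cosh_sq b]

lemma core (s θ : ℝ) (hs : 1 ≤ s) (hθ : 0 ≤ θ) :
    s * Real.sinh ((s + 1) / 2 * θ) ^ 2
      ≤ ((s + 1) / 2) ^ 2 * (Real.sinh (s * θ) * Real.sinh θ) := by
  have hs1 : (0:ℝ) < s + 1 := by linarith
  have hprod : Real.sinh (s * θ) * Real.sinh θ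
      = Real.sinh ((s + 1) / 2 * θ) ^ 2 - Real.sinh ((s - 1) / 2 * θ) ^ 2 := by
    have h := prodlem ((s + 1) / 2 * θ) ((s - 1) / 2 * θ)
    rw [show (s + 1) / 2 * θ + (s - 1) / 2 * θ = s * θ by ring,
        show (s + 1) / 2 * θ - (s - 1) / 2 * θ = θ by ring] at h
    exact h
  have hkey : Real.sinh ((s - 1) / 2 * θ) ≤ (s - 1) / (s + 1) * Real.sinh ((s + 1) / 2 * θ) := by
    have h := sinh_mul_le ((s - 1) / (s + 1)) ((s + 1) / 2 * θ)
      (div_nonneg (by linarith) (by linarith)) (by rw [div_le_one hs1]; linarith)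
      (mul_nonneg (by positivity) hθ)
    rw [show (s - 1) / (s + 1) * ((s + 1) / 2 * θ) = (s - 1) / 2 * θ by field_simp] at h
    exact h
  have hnn : 0 ≤ Real.sinh ((s - 1) / 2 * θ) := Real.sinh_nonneg_iff.2 (mul_nonneg (by linarith) hθ)
  have hsq : Real.sinh ((s - 1) / 2 * θ) ^ 2
      ≤ ((s - 1) / (s + 1)) ^ 2 * Real.sinh ((s + 1) / 2 * θ) ^ 2 := by
    have := pow_le_pow_left₀ hnn hkey 2
    calc Real.sinh ((s - 1) / 2 * θ) ^ 2
        ≤ ((s - 1) / (s + 1) * Real.sinh ((s + 1) / 2 * θ)) ^ 2 := this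
      _ = ((s - 1) / (s + 1)) ^ 2 * Real.sinh ((s + 1) / 2 * θ) ^ 2 := by ring
  have hc2 : ((s + 1) / 2) ^ 2 * ((s - 1) / (s + 1)) ^ 2 = (s - 1) ^ 2 / 4 := by
    field_simp
    ring
  rw [hprod]
  nlinarith [hsq, sq_nonneg (Real.sinh ((s + 1) / 2 * θ))]

open Real

lemma expdiff (m θ : ℝ) : Real.exp (m + θ) - Real.exp (m - θ) = 2 * Real.exp m * Real.sinh θ := by
  rw [Real.sinh_eq, Real.exp_add, Real.exp_sub, Real.exp_neg]
  have := Real.exp_pos θ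
  field_simp

lemma main_le (s a b : ℝ) (hs : 1 ≤ s) (hb : 0 ≤ b) (hab : b ≤ a) :
    4 * s / (s + 1) ^ 2 * (a ^ ((s + 1) / 2) - b ^ ((s + 1) / 2)) ^ 2
      ≤ (a ^ s - b ^ s) * (a - b) := by
  have hs1 : (0:ℝ) < s + 1 := by linarith
  rcases hb.eq_or_lt with hb0 | hb0
  · -- b = 0
    subst hb0
    rw [Real.zero_rpow (by positivity), Real.zero_rpow (by positivity), sub_zero, sub_zero,
      sub_zero]
    rcases hab.eq_or_lt with ha0 | ha0
    · simp [← ha0, Real.zero_rpow, (by positivity : ((s+1)/2 : ℝ) ≠ 0)]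
    · have key : (a ^ ((s + 1) / 2)) ^ 2 = a ^ s * a := by
        rw [← Real.rpow_natCast (a ^ ((s + 1) / 2)) 2, ← Real.rpow_mul hab]
        rw [show ((s + 1) / 2 * (2:ℕ) : ℝ) = s + 1 by push_cast; ring]
        rw [Real.rpow_add ha0, Real.rpow_one]
      rw [key]
      have hC : 4 * s / (s + 1) ^ 2 ≤ 1 := by
        rw [div_le_one (by positivity)]
        nlinarith
      have hpos : 0 ≤ a ^ s * a := mul_nonneg (Real.rpow_nonneg hab s) hab
      nlinarith [hC, hpos]
  · -- 0 < b ≤ a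
    have ha0 : 0 < a := lt_of_lt_of_le hb0 hab
    set u := Real.log a with hu
    set v := Real.log b with hv
    have hvu : v ≤ u := Real.log_le_log hb0 hab
    set m := (u + v) / 2 with hm
    set θ := (u - v) / 2 with hθdef
    have hθ : 0 ≤ θ := by simp [hθdef]; linarith
    have hra : ∀ t : ℝ, a ^ t = Real.exp (t * u) := fun t => by rw [Real.rpow_def_of_pos ha0, mul_comm]
    have hrb : ∀ t : ℝ, b ^ t = Real.exp (t * v) := fun t => by rw [Real.rpow_def_of_pos hb0, mul_comm]
    have ds : a ^ s - b ^ s = 2 * Real.exp (s * m) * Real.sinh (s * θ) := by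
      rw [hra, hrb, show s * u = s * m + s * θ by rw [hm, hθdef]; ring,
        show s * v = s * m - s * θ by rw [hm, hθdef]; ring, expdiff]
    have d1 : a - b = 2 * Real.exp m * Real.sinh θ := by
      rw [show a = Real.exp (m + θ) by
            rw [show m + θ = u by rw [hm, hθdef]; ring]; exact (Real.exp_log ha0).symm,
          show b = Real.exp (m - θ) by
            rw [show m - θ = v by rw [hm, hθdef]; ring]; exact (Real.exp_log hb0).symm,
          expdiff]
    have dp : a ^ ((s + 1) / 2) - b ^ ((s + 1) / 2)
        = 2 * Real.exp ((s + 1) / 2 * m) * Real.sinh ((s + 1) / 2 * θ) := by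
      rw [hra, hrb, show (s + 1) / 2 * u = (s + 1) / 2 * m + (s + 1) / 2 * θ by
            rw [hm, hθdef]; ring,
          show (s + 1) / 2 * v = (s + 1) / 2 * m - (s + 1) / 2 * θ by rw [hm, hθdef]; ring,
          expdiff]
    have hE : Real.exp (s * m) * Real.exp m = Real.exp ((s + 1) / 2 * m) ^ 2 := by
      rw [← Real.exp_add, sq, ← Real.exp_add]
      ring_nf
    rw [ds, d1, dp, div_mul_eq_mul_div, div_le_iff₀ (by positivity : (0:ℝ) < (s + 1) ^ 2)]
    have hcore := core s θ hs hθ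
    have hEp : (0:ℝ) < Real.exp ((s + 1) / 2 * m) ^ 2 := by positivity
    have hmul := mul_le_mul_of_nonneg_left hcore (by positivity :
        (0:ℝ) ≤ 16 * Real.exp ((s + 1) / 2 * m) ^ 2)
    calc 4 * s * (2 * Real.exp ((s + 1) / 2 * m) * Real.sinh ((s + 1) / 2 * θ)) ^ 2
        = 16 * Real.exp ((s + 1) / 2 * m) ^ 2 * (s * Real.sinh ((s + 1) / 2 * θ) ^ 2) := by
          ring
      _ ≤ 16 * Real.exp ((s + 1) / 2 * m) ^ 2
            * (((s + 1) / 2) ^ 2 * (Real.sinh (s * θ) * Real.sinh θ)) := hmul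
      _ = 2 * Real.exp (s * m) * Real.sinh (s * θ) * (2 * Real.exp m * Real.sinh θ)
            * (s + 1) ^ 2 := by rw [← hE]; ring

theorem stmt_17 (s a b : ℝ) (hs : 1 ≤ s) (ha : 0 ≤ a) (hb : 0 ≤ b) :
    4 * s / (s + 1) ^ 2 * (a ^ ((s + 1) / 2) - b ^ ((s + 1) / 2)) ^ 2
      ≤ (a ^ s - b ^ s) * (a - b) := by
  rcases le_total b a with h | h
  · exact main_le s a b hs hb h
  · have := main_le s b a hs ha h
    nlinarith [this]
end
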